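/- For all t ∈ (0, π/2): 3·cos²(t/2)/(2cos(t/2)+1) < sin t / t < (4(√2+1)/π)·cos²(t/2)/(2cos(t/2)+1). -/

import Mathlib

/-!
With `u = t / 2` one has `sin t / t = ((2 sin u + tan u) / u) * (cos² u / (2 cos u + 1))`, so the
claim is `3 < (2 sin u + tan u) / u < 4 (√2 + 1) / π` on `(0, π/4)`. The function
`f = 2 sin + tan` is strictly convex on `[0, π/2)` (`f'' = 2 sin x (1 - cos³ x) / cos³ x`) with
`f 0 = 0`, so the slope `f u / u` exceeds `f' 0 = 3` and is increasing, hence below its value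
`4 (√2 + 1) / π` at `π/4`.
-/

open Real Set

lemma hasDerivAt_two_mul_sin_add_tan {x : ℝ} (hx : cos x ≠ 0) :
    HasDerivAt (fun y => 2 * sin y + tan y) (2 * cos x + 1 / cos x ^ 2) x :=
  ((hasDerivAt_sin x).const_mul 2).add (hasDerivAt_tan hx)

lemma hasDerivAt_two_mul_cos_add_inv_cos_sq {x : ℝ} (hx : cos x ≠ 0) :
    HasDerivAt (fun y => 2 * cos y + 1 / cos y ^ 2)
      (2 * sin x * (1 - cos x ^ 3) / cos x ^ 3) x := by
  have hsq : HasDerivAt (fun y => cos y ^ 2) (2 * cos x ^ 1 * -sin x) x :=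
    (hasDerivAt_cos x).pow 2
  refine (((hasDerivAt_cos x).const_mul 2).add ((hasDerivAt_const x 1).div hsq
    (pow_ne_zero 2 hx))).congr_deriv ?_
  field_simp
  ring

lemma strictConvexOn_two_mul_sin_add_tan :
    StrictConvexOn ℝ (Ico 0 (π / 2)) (fun x => 2 * sin x + tan x) := by
  have hcos : ∀ x ∈ Ioo (-(π / 2)) (π / 2), cos x ≠ 0 := fun x hx => (cos_pos_of_mem_Ioo hx).ne'
  refine strictConvexOn_of_deriv2_pos (convex_Ico _ _) ?_ fun x hx => ?_
  · exact fun x hx => (hasDerivAt_two_mul_sin_add_tan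
      (hcos x ⟨by linarith [hx.1, pi_pos], hx.2⟩)).continuousAt.continuousWithinAt
  rw [interior_Ico] at hx
  have hx' : x ∈ Ioo (-(π / 2)) (π / 2) := ⟨by linarith [hx.1, pi_pos], hx.2⟩
  have hderiv : deriv (fun y => 2 * sin y + tan y) =ᶠ[nhds x]
      fun y => 2 * cos y + 1 / cos y ^ 2 := by
    filter_upwards [isOpen_Ioo.mem_nhds hx'] with y hy
    exact (hasDerivAt_two_mul_sin_add_tan (hcos y hy)).deriv
  rw [Function.iterate_succ_apply, Function.iterate_one, hderiv.deriv_eq,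
    (hasDerivAt_two_mul_cos_add_inv_cos_sq (hcos x hx')).deriv]
  have hc : 0 < cos x := cos_pos_of_mem_Ioo hx'
  have hs : 0 < sin x := sin_pos_of_pos_of_lt_pi hx.1 (by linarith [hx.2, pi_pos])
  have hc1 : cos x < 1 := by
    simpa using cos_lt_cos_of_nonneg_of_le_pi_div_two le_rfl hx.2.le hx.1
  have : 0 < 1 - cos x ^ 3 := by nlinarith [pow_lt_one₀ hc.le hc1 (by norm_num : 3 ≠ 0)]
  positivity

lemma three_lt_two_mul_sin_add_tan_div {u : ℝ} (hu0 : 0 < u) (hu : u < π / 2) :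
    3 < (2 * sin u + tan u) / u := by
  have hslope := strictConvexOn_two_mul_sin_add_tan.deriv_lt_slope ⟨le_rfl, by positivity⟩
    ⟨hu0.le, hu⟩ hu0 (hasDerivAt_two_mul_sin_add_tan (by simp)).differentiableAt
  rw [(hasDerivAt_two_mul_sin_add_tan (by simp)).deriv, slope_def_field] at hslope
  norm_num at hslope
  exact hslope

lemma two_mul_sin_add_tan_div_lt {u : ℝ} (hu0 : 0 < u) (hu : u < π / 4) :
    (2 * sin u + tan u) / u < 4 * (√2 + 1) / π := by
  have hsecant := strictConvexOn_two_mul_sin_add_tan.secant_strict_mono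
    ⟨le_rfl, by positivity⟩ ⟨hu0.le, by linarith⟩ ⟨by positivity, by linarith [pi_pos]⟩
    hu0.ne' (by positivity) hu
  simp only [sin_zero, tan_zero, sin_pi_div_four, tan_pi_div_four, sub_zero, mul_zero,
    add_zero] at hsecant
  refine hsecant.trans_eq ?_
  field_simp

lemma sin_div_eq_two_mul_sin_add_tan_half_div_mul (t : ℝ) (hc : cos (t / 2) ≠ 0)
    (hc' : 2 * cos (t / 2) + 1 ≠ 0) :
    sin t / t = (2 * sin (t / 2) + tan (t / 2)) / (t / 2) *
      (cos (t / 2) ^ 2 / (2 * cos (t / 2) + 1)) := by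
  conv_lhs => rw [← mul_div_cancel₀ t (two_ne_zero' ℝ), sin_two_mul]
  rw [tan_eq_sin_div_cos]
  field_simp

theorem stmt13 (t : ℝ) (ht : t ∈ Set.Ioo 0 (Real.pi/2)) :
    3 * (Real.cos (t/2))^2 / (2*Real.cos (t/2) + 1) < Real.sin t / t ∧
    Real.sin t / t < (4*(Real.sqrt 2 + 1)/Real.pi) * ((Real.cos (t/2))^2 / (2*Real.cos (t/2) + 1)) := by
  obtain ⟨ht0, htπ⟩ := ht
  have hc : 0 < cos (t / 2) := cos_pos_of_mem_Ioo ⟨by linarith [pi_pos], by linarith⟩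
  have hw : 0 < cos (t / 2) ^ 2 / (2 * cos (t / 2) + 1) := by positivity
  rw [sin_div_eq_two_mul_sin_add_tan_half_div_mul t hc.ne' (by positivity), mul_div_assoc]
  exact ⟨mul_lt_mul_of_pos_right
      (three_lt_two_mul_sin_add_tan_div (by positivity) (by linarith)) hw,
    mul_lt_mul_of_pos_right (two_mul_sin_add_tan_div_lt (by positivity) (by linarith)) hw⟩
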